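/- arXiv:2205.15483 — 3 statements merged into one kernel-verified Lean document; each statement's English description precedes it below -/
import Mathlib

section
/- In the integer program (eq. 14) for PDAG-Minimum-Paths: if x is a feasible 0–1 assignment, then the set of selected original edges (variables equal to 1, excluding edges from the auxiliary vertices V̂) decomposes into at most n_d vertex-disjoint directed paths in G, each starting at an out-neighbor of a distinct auxiliary vertex, and together these paths contain exactly one vertex of each color. -/
/-!
Constraint (i) gives every vertex at most one selected incoming edge, and then (ii) at most one
outgoing one. So the selected original edges form a partial injective successor function `f`,
and the selected auxiliary edges a partial injective start map `s` whose values have no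
`f`-predecessor. As `G` is acyclic, following `f` from `s i` terminates, and the resulting paths
are pairwise disjoint. By (ii) the tail of a selected edge is itself entered by a selected edge,
so walking backwards from any entered vertex ends at some `s i`: the paths cover exactly the
entered vertices and all selected original edges. The entered vertices of color `c` correspond
to their unique incoming edges, so by (i) there is exactly one of them.
-/

open Finset Relation

theorem Finite.wellFounded_of_acyclic {α : Type*} [Finite α] {r : α → α → Prop}
    (h : ∀ a, ¬ TransGen r a a) : WellFounded r :=
  haveI : IsTrans α (TransGen r) := ⟨fun _ _ _ => TransGen.trans⟩
  haveI : Std.Irrefl (TransGen r) := ⟨h⟩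
  Subrelation.wf TransGen.single (Finite.wellFounded_of_trans_of_irrefl _)

theorem List.rel_of_mem_zip_tail {α : Type*} {R : α → α → Prop} {a b : α} :
    ∀ {l : List α}, l.IsChain R → (a, b) ∈ l.zip l.tail → R a b
  | _ :: _ :: _, hl, hab => by
    rw [List.isChain_cons_cons] at hl
    rcases List.mem_cons.1 hab with hab | hab
    · obtain ⟨rfl, rfl⟩ := Prod.mk.inj hab
      exact hl.1
    · exact rel_of_mem_zip_tail hl.2 hab

theorem List.sum_length_filter_eq_card_filter {ι α : Type*} [Fintype ι] [DecidableEq α]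
    {L : ι → List α} (hnodup : ∀ i, (L i).Nodup)
    (hdisj : ∀ i j, i ≠ j → ∀ a, a ∈ L i → a ∉ L j)
    {C : Finset α} (hC : ∀ a, a ∈ C ↔ ∃ i, a ∈ L i) (p : α → Bool) :
    ∑ i, ((L i).filter p).length = #{a ∈ C | p a} := by
  have hC' : C = univ.biUnion fun i => (L i).toFinset := by ext a; simp [hC]
  rw [hC', filter_biUnion, card_biUnion]
  · refine sum_congr rfl fun i _ => ?_
    rw [← List.toFinset_filter, List.toFinset_card_of_nodup ((hnodup i).filter p)]
  · intro i _ j _ hij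
    exact disjoint_filter_filter
      (List.disjoint_toFinset_iff_disjoint.2 fun a hi hj => hdisj i j hij a hi hj)

theorem Finset.exists_option_fun_of_card_filter_fst_le_one {α β : Type*} [DecidableEq α]
    {S : Finset (α × β)} (h : ∀ a, #{e ∈ S | e.1 = a} ≤ 1) :
    ∃ f : α → Option β, ∀ a b, f a = some b ↔ (a, b) ∈ S := by
  classical
  refine ⟨fun a => if h : ∃ b, (a, b) ∈ S then some h.choose else none, fun a b => ?_⟩
  have huniq : ∀ {b b'}, (a, b) ∈ S → (a, b') ∈ S → b = b' := fun hb hb' =>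
    congrArg Prod.snd (card_le_one.1 (h a) _ (mem_filter.2 ⟨hb, rfl⟩) _ (mem_filter.2 ⟨hb', rfl⟩))
  by_cases hex : ∃ b, (a, b) ∈ S
  · simp only [hex, dite_true, Option.some.injEq]
    exact ⟨fun h => h ▸ hex.choose_spec, huniq hex.choose_spec⟩
  · simp only [hex, dite_false, reduceCtorEq, false_iff]
    exact fun hb => hex ⟨b, hb⟩

theorem Finset.injOn_snd_of_card_filter_snd_le_one {α V : Type*} [DecidableEq V]
    {S : Finset (α × V)} (h : ∀ v, #{e ∈ S | e.2 = v} ≤ 1) :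
    Set.InjOn Prod.snd (S : Set (α × V)) :=
  fun e he _ he' hee' =>
    card_le_one.1 (h e.2) _ (mem_filter.2 ⟨he, rfl⟩) _ (mem_filter.2 ⟨he', hee'.symm⟩)

section InDegreeAtMostOne

variable {α β V : Type*} [DecidableEq V] {S : Finset (α × V)} {T : Finset (β × V)}

theorem Finset.card_filter_snd_add_le_one_of_color {γ : Type*} [DecidableEq γ] (col : V → γ)
    (hcolor : ∀ c, #{e ∈ S | col e.2 = c} + #{e ∈ T | col e.2 = c} = 1) (v : V) :
    #{e ∈ S | e.2 = v} + #{e ∈ T | e.2 = v} ≤ 1 := by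
  have hS : #{e ∈ S | e.2 = v} ≤ #{e ∈ S | col e.2 = col v} :=
    card_le_card (monotone_filter_right S fun _ _ h => congrArg col h)
  have hT : #{e ∈ T | e.2 = v} ≤ #{e ∈ T | col e.2 = col v} :=
    card_le_card (monotone_filter_right T fun _ _ h => congrArg col h)
  exact (add_le_add hS hT).trans (hcolor (col v)).le

theorem Finset.disjoint_image_snd_of_card_filter_snd_add_le_one
    (hin : ∀ v, #{e ∈ S | e.2 = v} + #{e ∈ T | e.2 = v} ≤ 1) :
    Disjoint (S.image Prod.snd) (T.image Prod.snd) := by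
  refine disjoint_left.2 fun v hS hT => ?_
  obtain ⟨e, he, rfl⟩ := mem_image.1 hS
  obtain ⟨e', he', hv⟩ := mem_image.1 hT
  have hpos : 0 < #{x ∈ S | x.2 = e.2} := card_pos.2 ⟨e, mem_filter.2 ⟨he, rfl⟩⟩
  have hpos' : 0 < #{x ∈ T | x.2 = e.2} := card_pos.2 ⟨e', mem_filter.2 ⟨he', hv⟩⟩
  have := hin e.2
  omega

theorem Finset.card_filter_image_snd_union
    (hin : ∀ v, #{e ∈ S | e.2 = v} + #{e ∈ T | e.2 = v} ≤ 1) (p : V → Prop) [DecidablePred p] :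
    #{v ∈ S.image Prod.snd ∪ T.image Prod.snd | p v} = #{e ∈ S | p e.2} + #{e ∈ T | p e.2} := by
  have hS := injOn_snd_of_card_filter_snd_le_one fun v => le_of_add_le_left (hin v)
  have hT := injOn_snd_of_card_filter_snd_le_one fun v => le_of_add_le_right (hin v)
  rw [filter_union, card_union_of_disjoint (disjoint_filter_filter
      (disjoint_image_snd_of_card_filter_snd_add_le_one hin)),
    filter_image, filter_image, card_image_of_injOn (hS.mono (filter_subset _ _)),
    card_image_of_injOn (hT.mono (filter_subset _ _))]

end InDegreeAtMostOne

def HasInEdge {V ι : Type*} (f : V → Option V) (s : ι → Option V) (v : V) : Prop :=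
  (∃ u, f u = some v) ∨ ∃ i, s i = some v

section SuccPath

variable {V ι : Type*} {f : V → Option V} (wf : WellFounded fun a b => f b = some a)

noncomputable def succPath : V → List V :=
  wf.fix fun v ih => v :: match h : f v with
    | none => []
    | some w => ih w h

noncomputable def optSuccPath (o : Option V) : List V := o.elim [] (succPath wf)

@[simp]
theorem optSuccPath_none : optSuccPath wf none = [] := rfl

@[simp]
theorem optSuccPath_some (v : V) : optSuccPath wf (some v) = succPath wf v := rfl

theorem succPath_eq (v : V) : succPath wf v = v :: optSuccPath wf (f v) := by
  rw [succPath, WellFounded.fix_eq]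
  split <;> simp_all [optSuccPath, succPath]

variable {wf}

theorem mem_succPath_iff {v w : V} :
    w ∈ succPath wf v ↔ ReflTransGen (fun a b => f a = some b) v w := by
  induction v using wf.induction with
  | _ v ih =>
    rw [succPath_eq, List.mem_cons, ReflTransGen.cases_head_iff, eq_comm]
    cases h : f v with
    | none => simp
    | some u => simp [ih u h]

theorem mem_optSuccPath_iff {o : Option V} {w : V} :
    w ∈ optSuccPath wf o ↔ ∃ v ∈ o, ReflTransGen (fun a b => f a = some b) v w := by
  cases o <;> simp [mem_succPath_iff]

theorem head?_optSuccPath (o : Option V) : (optSuccPath wf o).head? = o := by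
  cases o <;> simp [succPath_eq]

theorem isChain_succPath (v : V) : (succPath wf v).IsChain fun a b => f a = some b := by
  induction v using wf.induction with
  | _ v ih =>
    rw [succPath_eq, List.isChain_cons, head?_optSuccPath]
    refine ⟨fun _ => id, ?_⟩
    cases h : f v with
    | none => exact List.isChain_nil
    | some u => exact ih u h

theorem isChain_optSuccPath (o : Option V) :
    (optSuccPath wf o).IsChain fun a b => f a = some b := by
  cases o
  · exact List.isChain_nil
  · exact isChain_succPath (wf := wf) _

theorem nodup_succPath (v : V) : (succPath wf v).Nodup := by
  induction v using wf.induction with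
  | _ v ih =>
    rw [succPath_eq, List.nodup_cons, mem_optSuccPath_iff]
    refine ⟨fun ⟨u, hu, hvu⟩ => ?_, ?_⟩
    · exact wf.transGen.irrefl.irrefl v (TransGen.tail' (reflTransGen_swap.2 hvu) hu)
    · cases h : f v with
      | none => exact List.nodup_nil
      | some u => exact ih u h

theorem nodup_optSuccPath (o : Option V) : (optSuccPath wf o).Nodup := by
  cases o
  · exact List.nodup_nil
  · exact nodup_succPath (wf := wf) _

theorem mem_zip_tail_succPath {v a b : V} (ha : a ∈ succPath wf v) (hab : f a = some b) :
    (a, b) ∈ (succPath wf v).zip (succPath wf v).tail := by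
  induction v using wf.induction with
  | _ v ih =>
    rw [succPath_eq] at ha ⊢
    rcases List.mem_cons.1 ha with rfl | ha
    · simp [hab, succPath_eq wf b]
    · cases h : f v with
      | none => simp [h] at ha
      | some u =>
        rw [h, optSuccPath_some] at ha
        rw [optSuccPath_some]
        have hu := ih u h ha
        rw [succPath_eq wf u] at hu ⊢
        exact List.mem_cons_of_mem _ hu

theorem mem_zip_tail_optSuccPath {o : Option V} {a b : V} (ha : a ∈ optSuccPath wf o)
    (hab : f a = some b) : (a, b) ∈ (optSuccPath wf o).zip (optSuccPath wf o).tail := by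
  cases o
  · simp at ha
  · exact mem_zip_tail_succPath (wf := wf) ha hab

theorem eq_of_mem_succPath_of_mem_succPath
    (hinj : ∀ a b c, f a = some c → f b = some c → a = b) {v v' w : V}
    (hv : ∀ u, f u ≠ some v) (hv' : ∀ u, f u ≠ some v')
    (hw : w ∈ succPath wf v) (hw' : w ∈ succPath wf v') : v = v' := by
  rw [mem_succPath_iff, ← reflTransGen_swap] at hw hw'
  have hroot : ∀ {x y}, (∀ u, f u ≠ some y) →
      ReflTransGen (fun a b => f a = some b) x y → x = y := fun hy hxy => by
    rcases (ReflTransGen.cases_tail_iff _ _ _).1 hxy with h | ⟨u, -, hu⟩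
    · exact h.symm
    · exact absurd hu (hy u)
  -- injectivity of `f` makes the backward walk from `w` deterministic
  rcases hw.total_of_right_unique (fun a b c hba hca => hinj b c a hba hca) hw' with h | h
  · exact (hroot hv ((reflTransGen_swap (r := fun a b => f a = some b)).1 h)).symm
  · exact hroot hv' ((reflTransGen_swap (r := fun a b => f a = some b)).1 h)

variable {s : ι → Option V}

theorem exists_mem_optSuccPath_iff (wf' : WellFounded fun a b => f a = some b)
    (hcover : ∀ v w, f v = some w → HasInEdge f s v) {w : V} :
    (∃ i, w ∈ optSuccPath wf (s i)) ↔ HasInEdge f s w := by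
  constructor
  · rintro ⟨i, hw⟩
    obtain ⟨v, hv, hvw⟩ := mem_optSuccPath_iff.1 hw
    rcases (ReflTransGen.cases_tail_iff _ _ _).1 hvw with rfl | ⟨u, -, hu⟩
    · exact Or.inr ⟨i, hv⟩
    · exact Or.inl ⟨u, hu⟩
  · induction w using wf'.induction with
    | _ w ih =>
      rintro (⟨u, hu⟩ | ⟨i, hi⟩)
      · obtain ⟨i, hi⟩ := ih u hu (hcover u w hu)
        obtain ⟨v, hv, hvu⟩ := mem_optSuccPath_iff.1 hi
        exact ⟨i, mem_optSuccPath_iff.2 ⟨v, hv, hvu.tail hu⟩⟩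
      · exact ⟨i, mem_optSuccPath_iff.2 ⟨w, hi, ReflTransGen.refl⟩⟩

theorem exists_mem_zip_tail_optSuccPath_iff (wf' : WellFounded fun a b => f a = some b)
    (hcover : ∀ v w, f v = some w → HasInEdge f s v) {a b : V} :
    (∃ i, (a, b) ∈ (optSuccPath wf (s i)).zip (optSuccPath wf (s i)).tail) ↔ f a = some b := by
  refine ⟨fun ⟨i, hi⟩ => List.rel_of_mem_zip_tail (R := fun a b => f a = some b)
    (isChain_optSuccPath _) hi, fun hab => ?_⟩
  obtain ⟨i, hi⟩ := (exists_mem_optSuccPath_iff wf' hcover).2 (hcover a b hab)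
  exact ⟨i, mem_zip_tail_optSuccPath hi hab⟩

end SuccPath

section FeasibleSelection

variable {V ι : Type*} [DecidableEq V] {Xorig : Finset (V × V)} {Xaux : Finset (ι × V)}
  {f : V → Option V} {s : ι → Option V}

theorem optSuccPath_disjoint {wf : WellFounded fun a b => f b = some a}
    (hf : ∀ a b, f a = some b ↔ (a, b) ∈ Xorig) (hs : ∀ i v, s i = some v ↔ (i, v) ∈ Xaux)
    (hin : ∀ v, #{e ∈ Xorig | e.2 = v} + #{e ∈ Xaux | e.2 = v} ≤ 1)
    {i j : ι} (hij : i ≠ j) {w : V} (hi : w ∈ optSuccPath wf (s i)) :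
    w ∉ optSuccPath wf (s j) := by
  intro hj
  obtain ⟨v, hv, hvw⟩ := mem_optSuccPath_iff.1 hi
  obtain ⟨v', hv', hv'w⟩ := mem_optSuccPath_iff.1 hj
  have hroot : ∀ {k x}, s k = some x → ∀ u, f u ≠ some x := fun hx u hu =>
    disjoint_left.1 (disjoint_image_snd_of_card_filter_snd_add_le_one hin)
      (mem_image_of_mem Prod.snd ((hf _ _).1 hu)) (mem_image_of_mem Prod.snd ((hs _ _).1 hx))
  have hvv' : v = v' := eq_of_mem_succPath_of_mem_succPath (wf := wf)
    (fun a b c ha hb => congrArg Prod.fst <|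
      injOn_snd_of_card_filter_snd_le_one (fun v => le_of_add_le_left (hin v))
        ((hf _ _).1 ha) ((hf _ _).1 hb) rfl)
    (hroot hv) (hroot hv') (mem_succPath_iff.2 hvw) (mem_succPath_iff.2 hv'w)
  subst hvv'
  exact hij <| congrArg Prod.fst <|
    injOn_snd_of_card_filter_snd_le_one (fun v => le_of_add_le_right (hin v))
      ((hs _ _).1 hv) ((hs _ _).1 hv') rfl

theorem hasInEdge_of_outdeg_le_indeg
    (hf : ∀ a b, f a = some b ↔ (a, b) ∈ Xorig) (hs : ∀ i v, s i = some v ↔ (i, v) ∈ Xaux)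
    (hflow : ∀ v, #{e ∈ Xorig | e.1 = v} ≤ #{e ∈ Xorig | e.2 = v} + #{e ∈ Xaux | e.2 = v})
    {v w : V} (hvw : f v = some w) : HasInEdge f s v := by
  have hout : 0 < #{e ∈ Xorig | e.1 = v} :=
    card_pos.2 ⟨(v, w), mem_filter.2 ⟨(hf v w).1 hvw, rfl⟩⟩
  rcases Nat.add_pos_iff_pos_or_pos.1 (hout.trans_le (hflow v)) with h | h
  · obtain ⟨⟨u, v'⟩, he⟩ := card_pos.1 h
    obtain ⟨hmem, rfl : v' = v⟩ := mem_filter.1 he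
    exact Or.inl ⟨u, (hf _ _).2 hmem⟩
  · obtain ⟨⟨i, v'⟩, he⟩ := card_pos.1 h
    obtain ⟨hmem, rfl : v' = v⟩ := mem_filter.1 he
    exact Or.inr ⟨i, (hs _ _).2 hmem⟩

theorem mem_image_snd_union_iff_hasInEdge
    (hf : ∀ a b, f a = some b ↔ (a, b) ∈ Xorig) (hs : ∀ i v, s i = some v ↔ (i, v) ∈ Xaux)
    (w : V) : w ∈ Xorig.image Prod.snd ∪ Xaux.image Prod.snd ↔ HasInEdge f s w := by
  simp [HasInEdge, hf, hs]

end FeasibleSelection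

/-- If `x` is a feasible 0–1 assignment of the ILP (14) for
PDAG-Minimum-Paths — selected original edges `Xorig` and selected auxiliary edges
`Xaux` satisfying (i) each color has exactly one selected incoming edge, (ii) at each
vertex the selected out-degree is at most the selected in-degree, and (iii) each
auxiliary vertex has at most one selected outgoing edge — then the selected original
edges decompose into at most `n_d` vertex-disjoint directed paths in `G`, each starting
at an out-neighbor of a distinct auxiliary vertex, together containing exactly one
vertex of each color. -/
theorem ilp_solution_decomposes_into_paths
    {V : Type*} [Fintype V] [DecidableEq V] {k nd : ℕ}
    (E : Finset (V × V))
    (hdag : ∀ v, ¬ Relation.TransGen (fun a b => (a, b) ∈ E) v v)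
    (col : V → Fin k)
    (Xorig : Finset (V × V)) (hXE : Xorig ⊆ E)
    (Xaux : Finset (Fin nd × V))
    (hcolor : ∀ c : Fin k,
      (Xorig.filter (fun e => col e.2 = c)).card +
      (Xaux.filter (fun e => col e.2 = c)).card = 1)
    (hflow : ∀ v : V,
      (Xorig.filter (fun e => e.1 = v)).card ≤
      (Xorig.filter (fun e => e.2 = v)).card + (Xaux.filter (fun e => e.2 = v)).card)
    (haux : ∀ i : Fin nd, (Xaux.filter (fun e => e.1 = i)).card ≤ 1) :
    ∃ P : Fin nd → List V,
      (∀ i, (P i).Nodup) ∧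
      (∀ i j, i ≠ j → ∀ v, v ∈ P i → v ∉ P j) ∧
      (∀ i, (P i).Chain' (fun a b => (a, b) ∈ Xorig)) ∧
      (∀ i, ∀ h : P i ≠ [], (i, (P i).head h) ∈ Xaux) ∧
      (∀ e : V × V, e ∈ Xorig ↔ ∃ i, e ∈ (P i).zip (P i).tail) ∧
      (∀ c : Fin k,
        (Finset.univ.sum fun i => ((P i).filter (fun v => col v = c)).length) = 1) := by
  have hin := card_filter_snd_add_le_one_of_color col hcolor
  obtain ⟨f, hf⟩ := exists_option_fun_of_card_filter_fst_le_one fun v => (hflow v).trans (hin v)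
  obtain ⟨s, hs⟩ := exists_option_fun_of_card_filter_fst_le_one haux
  have hacyc : ∀ v, ¬ TransGen (fun a b => f a = some b) v v := fun v h =>
    hdag v (TransGen.mono (fun a b hab => hXE ((hf a b).1 hab)) v v h)
  have wf : WellFounded fun a b => f b = some a :=
    Finite.wellFounded_of_acyclic fun v h => hacyc v (transGen_swap.1 h)
  have wf' : WellFounded fun a b => f a = some b := Finite.wellFounded_of_acyclic hacyc
  have hcover : ∀ v w, f v = some w → HasInEdge f s v :=
    fun _ _ => hasInEdge_of_outdeg_le_indeg hf hs hflow
  have hdisj : ∀ i j, i ≠ j → ∀ v, v ∈ optSuccPath wf (s i) → v ∉ optSuccPath wf (s j) :=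
    fun _ _ hij _ => optSuccPath_disjoint hf hs hin hij
  refine ⟨fun i => optSuccPath wf (s i), fun i => nodup_optSuccPath (s i), hdisj,
    fun i => (isChain_optSuccPath (s i)).imp fun a b => (hf a b).1,
    fun i h => (hs _ _).1 ((head?_optSuccPath (s i)).symm.trans (List.head?_eq_some_head h)),
    fun ⟨a, b⟩ => (hf a b).symm.trans (exists_mem_zip_tail_optSuccPath_iff wf' hcover).symm,
    fun c => ?_⟩
  rw [List.sum_length_filter_eq_card_filter (fun i => nodup_optSuccPath (s i)) hdisj
      fun w => (mem_image_snd_union_iff_hasInEdge hf hs w).trans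
        (exists_mem_optSuccPath_iff wf' hcover).symm,
    card_filter_image_snd_union hin]
  simpa using hcolor c
end

section
/- Let the camera be at the origin, the obstacle a unit ball centered at r_co with ‖r_co‖ > 1, and the target at r_ct. If the target lies strictly outside the occlusion cone of the obstacle (the set of points p with ⟨p, r_co⟩/‖p‖ ≥ √(‖r_co‖² − 1)·‖r_co‖/‖r_co‖, i.e., within angular radius arcsin(1/‖r_co‖) of the direction r_co and beyond the tangent point), then the open segment from the origin to r_ct does not intersect the open unit ball centered at r_co. -/
open Real RealInnerProductSpace

section

variable {E : Type*} [NormedAddCommGroup E] [InnerProductSpace ℝ E]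

/- With `b = √(‖c‖² - 1)` the length of a tangent from the origin to the unit sphere about `c`,
`‖s • x - c‖² = (s‖x‖ - b)² + 1 + 2s(‖x‖b - ⟪x, c⟫)`, and the last term is nonnegative. -/
theorem one_le_norm_smul_sub_of_inner_le {x c : E} {s : ℝ} (hc : 1 ≤ ‖c‖) (hs : 0 ≤ s)
    (hxc : ⟪x, c⟫ ≤ ‖x‖ * √(‖c‖ ^ 2 - 1)) : 1 ≤ ‖s • x - c‖ := by
  set b := √(‖c‖ ^ 2 - 1)
  have hb : b ^ 2 = ‖c‖ ^ 2 - 1 := sq_sqrt (by nlinarith)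
  have hexpand : ‖s • x - c‖ ^ 2 = (s * ‖x‖) ^ 2 - 2 * s * ⟪x, c⟫ + ‖c‖ ^ 2 := by
    rw [norm_sub_sq_real, norm_smul, real_inner_smul_left, norm_of_nonneg hs]
    ring
  have hsq : 1 ≤ ‖s • x - c‖ ^ 2 :=
    calc 1 ≤ (s * ‖x‖ - b) ^ 2 + 1 := le_add_of_nonneg_left (sq_nonneg _)
      _ = (s * ‖x‖) ^ 2 - 2 * s * (‖x‖ * b) + ‖c‖ ^ 2 := by rw [sub_sq, hb]; ring
      _ ≤ (s * ‖x‖) ^ 2 - 2 * s * ⟪x, c⟫ + ‖c‖ ^ 2 := by gcongr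
      _ = ‖s • x - c‖ ^ 2 := hexpand.symm
  exact one_le_sq_iff_one_le_abs _ |>.mp hsq |>.trans_eq (abs_norm _)

theorem inner_le_norm_mul_of_inner_div_norm_lt {x c : E} {b : ℝ}
    (h : ⟪x, c⟫ / ‖x‖ < b) : ⟪x, c⟫ ≤ ‖x‖ * b := by
  rcases eq_or_ne x 0 with rfl | hx
  · simp
  · exact ((div_lt_iff₀' (norm_pos_iff.mpr hx)).mp h).le

end

theorem outside_occlusion_cone_no_occlusion_general
    (rco rct : EuclideanSpace ℝ (Fin 3)) (hco : 1 < ‖rco‖)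
    (hcone : (inner ℝ rct rco : ℝ) / ‖rct‖ < Real.sqrt (‖rco‖ ^ 2 - 1)) :
    ∀ s ∈ Set.Ioo (0:ℝ) 1, ¬ ‖s • rct - rco‖ < 1 := by
  intro s hs
  have hinner := inner_le_norm_mul_of_inner_div_norm_lt hcone
  exact (one_le_norm_smul_sub_of_inner_le hco.le hs.1.le hinner).not_gt

/-- Camera at origin, unit-ball obstacle centered at `r_co` with
`‖r_co‖ > 1`, target at `r_ct`. If the target lies strictly outside the occlusion cone
(i.e. `⟨r_ct, r_co⟩/‖r_ct‖ < √(‖r_co‖² − 1)`), then the open segment from the origin to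
`r_ct` does not intersect the open unit ball centered at `r_co`. -/
theorem outside_occlusion_cone_no_occlusion
    (rco rct : EuclideanSpace ℝ (Fin 3)) (hco : 1 < ‖rco‖) (hct : rct ≠ 0)
    (hcone : (inner ℝ rct rco : ℝ) / ‖rct‖ < Real.sqrt (‖rco‖ ^ 2 - 1)) :
    ∀ s ∈ Set.Ioo (0:ℝ) 1, ¬ ‖s • rct - rco‖ < 1 :=
  outside_occlusion_cone_no_occlusion_general rco rct hco hcone
end

section
/- If in the augmented graph G′ every original vertex is reachable from some auxiliary vertex in one step (auxiliary vertices connect to all original vertices), and the edge relation among original vertices is given by the temporal order t_a + τ^j ≤ t_b, then a feasible solution to the ILP (14) exists whenever the shots can be partitioned into n_d chains of the temporal partial order with each chain using one sampled time per shot; conversely, if no such chain partition exists for any choice of sampled times, the ILP is infeasible. -/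
private lemma linearChain {α : Type*} {step : α → α → Prop}
    (hdet : ∀ a b c, step a b → step a c → b = c) :
    ∀ {r j : α}, Relation.ReflTransGen step r j → ∀ k, Relation.ReflTransGen step r k →
      Relation.ReflTransGen step j k ∨ Relation.ReflTransGen step k j := by
  intro r j h1
  induction h1 using Relation.ReflTransGen.head_induction_on with
  | refl => intro k h2; exact Or.inl h2
  | head h' h ih =>
    intro k h2
    rcases Relation.ReflTransGen.cases_head h2 with rfl | ⟨c', hc', h2'⟩
    · exact Or.inr (Relation.ReflTransGen.head h' h)
    · have hcc := hdet _ _ _ h' hc'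
      subst hcc
      exact ih k h2'

private lemma chainLe {α : Type*} {step : α → α → Prop} (ρ τ : α → ℝ)
    (hτ : ∀ j, 0 < τ j) (hstep : ∀ a b, step a b → ρ a + τ a ≤ ρ b)
    {j k : α} (h : Relation.ReflTransGen step j k) : j = k ∨ ρ j + τ j ≤ ρ k := by
  induction h with
  | refl => exact Or.inl rfl
  | @tail b c hb hbc ih =>
    right
    rcases ih with rfl | hle
    · exact hstep _ _ hbc
    · have h1 := hstep _ _ hbc
      have h2 := hτ b
      linarith

private lemma rootSpec {S nd : ℕ} (pred : Fin S → Fin S ⊕ Fin nd) (ρ : Fin S → ℝ)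
    (hdec : ∀ c j, pred c = .inl j → ρ j < ρ c) :
    ∀ (n : ℕ) (c : Fin S), (Finset.univ.filter (fun j => ρ j < ρ c)).card < n →
      ∃ r, (∃ i, pred r = Sum.inr i) ∧
        Relation.ReflTransGen (fun a b => pred b = Sum.inl a) r c := by
  intro n
  induction n with
  | zero => intro c h; omega
  | succ n ih =>
    intro c hc
    cases hp : pred c with
    | inr i => exact ⟨c, ⟨i, hp⟩, .refl⟩
    | inl j =>
      have hj := hdec c j hp
      have hsub : (Finset.univ.filter (fun k => ρ k < ρ j)) ⊆ (Finset.univ.filter (fun k => ρ k < ρ c)) := by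
        intro x hx; simp only [Finset.mem_filter, Finset.mem_univ, true_and] at hx ⊢; linarith
      have hss : (Finset.univ.filter (fun k => ρ k < ρ j)) ⊂ (Finset.univ.filter (fun k => ρ k < ρ c)) :=
        (Finset.ssubset_iff_of_subset hsub).mpr ⟨j, by simp [hj], by simp⟩
      have hcard := Finset.card_lt_card hss
      obtain ⟨r, hr1, hr2⟩ := ih j (by omega)
      exact ⟨r, hr1, hr2.tail hp⟩

private lemma mem_of_fst_eq {S : ℕ} {samp : Fin S → Finset ℝ} :
    ∀ (v : (j : Fin S) × {t : ℝ // t ∈ samp j}) (c : Fin S), v.1 = c → v.2.1 ∈ samp c := by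
  rintro ⟨a, t⟩ c rfl; exact t.2


private lemma fwd {S nd : ℕ} (samp : Fin S → Finset ℝ)
    (τ : Fin S → ℝ) (hτ : ∀ j, 0 < τ j)
    (Xorig : Finset (((j : Fin S) × {t : ℝ // t ∈ samp j}) ×
                        ((j : Fin S) × {t : ℝ // t ∈ samp j})))
    (Xaux : Finset (Fin nd × ((j : Fin S) × {t : ℝ // t ∈ samp j})))
    (horig : ∀ e ∈ Xorig, e.1.2.1 + τ e.1.1 ≤ e.2.2.1)
    (h1 : ∀ c : Fin S,
        (Xorig.filter (fun e => e.2.1 = c)).card +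
        (Xaux.filter (fun e => e.2.1 = c)).card = 1)
    (h2 : ∀ v : (j : Fin S) × {t : ℝ // t ∈ samp j},
        (Xorig.filter (fun e => e.1 = v)).card ≤
        (Xorig.filter (fun e => e.2 = v)).card +
        (Xaux.filter (fun e => e.2 = v)).card)
    (h3 : ∀ i : Fin nd, (Xaux.filter (fun e => e.1 = i)).card ≤ 1) :
    (∃ (σ : (j : Fin S) → {t : ℝ // t ∈ samp j}) (g : Fin S → Fin nd),
      ∀ j k : Fin S, g j = g k → j ≠ k →
        ((σ j).1 + τ j ≤ (σ k).1 ∨ (σ k).1 + τ k ≤ (σ j).1)) := by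
  classical
  have H : ∀ c : Fin S, ∃ (v : (j : Fin S) × {t : ℝ // t ∈ samp j}) (p : Fin S ⊕ Fin nd),
      v.1 = c ∧
      (∀ e ∈ Xorig, e.2.1 = c → e.2 = v ∧ p = Sum.inl e.1.1) ∧
      (∀ e ∈ Xaux, e.2.1 = c → e.2 = v ∧ p = Sum.inr e.1) ∧
      ((∃ e ∈ Xorig, e.2 = v ∧ p = Sum.inl e.1.1) ∨ (∃ e ∈ Xaux, e.2 = v ∧ p = Sum.inr e.1)) := by
    intro c
    have h := h1 c
    have hcases : ((Xorig.filter (fun e => e.2.1 = c)).card = 1 ∧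
        (Xaux.filter (fun e => e.2.1 = c)).card = 0) ∨
        ((Xorig.filter (fun e => e.2.1 = c)).card = 0 ∧
        (Xaux.filter (fun e => e.2.1 = c)).card = 1) := by omega
    rcases hcases with ⟨ho, ha⟩ | ⟨ho, ha⟩
    · obtain ⟨e, he⟩ := Finset.card_eq_one.mp ho
      have hee : e ∈ Xorig ∧ e.2.1 = c := by
        have : e ∈ Xorig.filter (fun e => e.2.1 = c) := he ▸ Finset.mem_singleton_self e
        simpa using this
      refine ⟨e.2, Sum.inl e.1.1, hee.2, ?_, ?_, Or.inl ⟨e, hee.1, rfl, rfl⟩⟩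
      · intro e' he' hc'
        have hmem : e' ∈ Xorig.filter (fun e => e.2.1 = c) := Finset.mem_filter.mpr ⟨he', hc'⟩
        rw [he, Finset.mem_singleton] at hmem
        subst hmem; exact ⟨rfl, rfl⟩
      · intro e' he' hc'
        have hmem : e' ∈ Xaux.filter (fun e => e.2.1 = c) := Finset.mem_filter.mpr ⟨he', hc'⟩
        rw [Finset.card_eq_zero.mp ha] at hmem
        simp at hmem
    · obtain ⟨e, he⟩ := Finset.card_eq_one.mp ha
      have hee : e ∈ Xaux ∧ e.2.1 = c := by
        have : e ∈ Xaux.filter (fun e => e.2.1 = c) := he ▸ Finset.mem_singleton_self e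
        simpa using this
      refine ⟨e.2, Sum.inr e.1, hee.2, ?_, ?_, Or.inr ⟨e, hee.1, rfl, rfl⟩⟩
      · intro e' he' hc'
        have hmem : e' ∈ Xorig.filter (fun e => e.2.1 = c) := Finset.mem_filter.mpr ⟨he', hc'⟩
        rw [Finset.card_eq_zero.mp ho] at hmem
        simp at hmem
      · intro e' he' hc'
        have hmem : e' ∈ Xaux.filter (fun e => e.2.1 = c) := Finset.mem_filter.mpr ⟨he', hc'⟩
        rw [he, Finset.mem_singleton] at hmem
        subst hmem; exact ⟨rfl, rfl⟩
  choose vsel pr hv1 hOrig hAux hEx using H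
  set ρ : Fin S → ℝ := fun c => (vsel c).2.1 with hρ
  -- every source of a selected original edge is a selected vertex
  have F3 : ∀ e ∈ Xorig, e.1 = vsel e.1.1 := by
    intro e he
    have hout : 0 < (Xorig.filter (fun f => f.1 = e.1)).card :=
      Finset.card_pos.mpr ⟨e, Finset.mem_filter.mpr ⟨he, rfl⟩⟩
    have hin := h2 e.1
    have hsum : 0 < (Xorig.filter (fun f => f.2 = e.1)).card +
        (Xaux.filter (fun f => f.2 = e.1)).card := lt_of_lt_of_le hout hin
    rcases (by omega : 0 < (Xorig.filter (fun f => f.2 = e.1)).card ∨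
        0 < (Xaux.filter (fun f => f.2 = e.1)).card) with hp | hp
    · obtain ⟨f, hf⟩ := Finset.card_pos.mp hp
      rw [Finset.mem_filter] at hf
      have h21 : f.2.1 = e.1.1 := congrArg Sigma.fst hf.2
      have hfv := (hOrig f.2.1 f hf.1 rfl).1
      rw [← hf.2, hfv, h21, hv1]
    · obtain ⟨f, hf⟩ := Finset.card_pos.mp hp
      rw [Finset.mem_filter] at hf
      have h21 : f.2.1 = e.1.1 := congrArg Sigma.fst hf.2
      have hfv := (hAux f.2.1 f hf.1 rfl).1
      rw [← hf.2, hfv, h21, hv1]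
  have hdec : ∀ c j, pr c = Sum.inl j → ρ j + τ j ≤ ρ c := by
    intro c j hcj
    rcases hEx c with ⟨e, he, he2, hpe⟩ | ⟨e, he, he2, hpe⟩
    · rw [hcj] at hpe
      have hj : e.1.1 = j := (Sum.inl.inj hpe).symm
      subst hj
      have h1e := F3 e he
      have hA : e.1.2.1 = ρ e.1.1 := congrArg (fun v => v.2.1) h1e
      have hB : e.2.2.1 = ρ c := congrArg (fun v => v.2.1) he2
      have := horig e he
      rw [hρ]
      linarith
    · rw [hcj] at hpe; simp at hpe
  have hinjl : ∀ c1 c2 j, pr c1 = Sum.inl j → pr c2 = Sum.inl j → c1 = c2 := by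
    intro c1 c2 j hA hB
    obtain ⟨e1, he1, he12, hpe1⟩ := (hEx c1).resolve_right
      (by rintro ⟨e, _, _, hpe⟩; rw [hA] at hpe; simp at hpe)
    obtain ⟨e2, he2, he22, hpe2⟩ := (hEx c2).resolve_right
      (by rintro ⟨e, _, _, hpe⟩; rw [hB] at hpe; simp at hpe)
    rw [hA] at hpe1; rw [hB] at hpe2
    have hj1 : e1.1.1 = j := (Sum.inl.inj hpe1).symm
    have hj2 : e2.1.1 = j := (Sum.inl.inj hpe2).symm
    have hsrc1 : e1.1 = vsel j := by rw [F3 e1 he1, hj1]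
    have hsrc2 : e2.1 = vsel j := by rw [F3 e2 he2, hj2]
    have hout_le : (Xorig.filter (fun f => f.1 = vsel j)).card ≤ 1 := by
      have h2v := h2 (vsel j)
      have hsubO : Xorig.filter (fun f => f.2 = vsel j) ⊆ Xorig.filter (fun f => f.2.1 = j) := by
        intro f hf; rw [Finset.mem_filter] at hf ⊢
        exact ⟨hf.1, by rw [hf.2, hv1 j]⟩
      have hsubA : Xaux.filter (fun f => f.2 = vsel j) ⊆ Xaux.filter (fun f => f.2.1 = j) := by
        intro f hf; rw [Finset.mem_filter] at hf ⊢
        exact ⟨hf.1, by rw [hf.2, hv1 j]⟩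
      have hc1 := Finset.card_le_card hsubO
      have hc2 := Finset.card_le_card hsubA
      have h1j := h1 j
      omega
    have he1m : e1 ∈ Xorig.filter (fun f => f.1 = vsel j) := Finset.mem_filter.mpr ⟨he1, hsrc1⟩
    have he2m : e2 ∈ Xorig.filter (fun f => f.1 = vsel j) := Finset.mem_filter.mpr ⟨he2, hsrc2⟩
    have heq : e1 = e2 := Finset.card_le_one.mp hout_le e1 he1m e2 he2m
    have hveq : vsel c1 = vsel c2 := by rw [← he12, ← he22, heq]
    have := congrArg Sigma.fst hveq
    rwa [hv1 c1, hv1 c2] at this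
  have hinjr : ∀ c1 c2 i, pr c1 = Sum.inr i → pr c2 = Sum.inr i → c1 = c2 := by
    intro c1 c2 i hA hB
    obtain ⟨e1, he1, he12, hpe1⟩ := (hEx c1).resolve_left
      (by rintro ⟨e, _, _, hpe⟩; rw [hA] at hpe; simp at hpe)
    obtain ⟨e2, he2, he22, hpe2⟩ := (hEx c2).resolve_left
      (by rintro ⟨e, _, _, hpe⟩; rw [hB] at hpe; simp at hpe)
    rw [hA] at hpe1; rw [hB] at hpe2
    have hi1 : e1.1 = i := (Sum.inr.inj hpe1).symm
    have hi2 : e2.1 = i := (Sum.inr.inj hpe2).symm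
    have he1m : e1 ∈ Xaux.filter (fun f => f.1 = i) := Finset.mem_filter.mpr ⟨he1, hi1⟩
    have he2m : e2 ∈ Xaux.filter (fun f => f.1 = i) := Finset.mem_filter.mpr ⟨he2, hi2⟩
    have heq : e1 = e2 := Finset.card_le_one.mp (h3 i) e1 he1m e2 he2m
    have hveq : vsel c1 = vsel c2 := by rw [← he12, ← he22, heq]
    have := congrArg Sigma.fst hveq
    rwa [hv1 c1, hv1 c2] at this
  have hcardlt : ∀ c : Fin S, (Finset.univ.filter (fun j => ρ j < ρ c)).card < S := by
    intro c
    have hss : (Finset.univ.filter (fun j => ρ j < ρ c)) ⊂ Finset.univ :=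
      (Finset.ssubset_iff_of_subset (Finset.filter_subset _ _)).mpr
        ⟨c, Finset.mem_univ c, by simp⟩
    have := Finset.card_lt_card hss
    simpa using this
  have hdec' : ∀ c j, pr c = Sum.inl j → ρ j < ρ c := by
    intro c j h
    have := hdec c j h
    have := hτ j
    linarith
  have hroots := fun c => rootSpec pr ρ hdec' S c (hcardlt c)
  choose root hri hrchain using hroots
  choose gg hgg using hri
  refine ⟨fun j => ⟨ρ j, mem_of_fst_eq (vsel j) j (hv1 j)⟩, gg, ?_⟩
  intro j k hgjk hne
  have hj := hgg j
  have hk := hgg k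
  rw [hgjk] at hj
  have hr : root j = root k := hinjr (root j) (root k) (gg k) hj hk
  have hlin := linearChain (step := fun a b => pr b = Sum.inl a)
    (fun a b c hb hc => hinjl b c a hb hc) (hrchain j) k (hr ▸ hrchain k)
  rcases hlin with h | h
  · rcases chainLe ρ τ hτ (fun a b hab => hdec b a hab) h with rfl | hle
    · exact absurd rfl hne
    · exact Or.inl hle
  · rcases chainLe ρ τ hτ (fun a b hab => hdec b a hab) h with rfl | hle
    · exact absurd rfl hne
    · exact Or.inr hle


private lemma bwd {S nd : ℕ} (samp : Fin S → Finset ℝ)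
    (τ : Fin S → ℝ) (hτ : ∀ j, 0 < τ j)
    (σ : (j : Fin S) → {t : ℝ // t ∈ samp j}) (g : Fin S → Fin nd)
    (hchain : ∀ j k : Fin S, g j = g k → j ≠ k →
        ((σ j).1 + τ j ≤ (σ k).1 ∨ (σ k).1 + τ k ≤ (σ j).1)) :
    (∃ (Xorig : Finset (((j : Fin S) × {t : ℝ // t ∈ samp j}) ×
                        ((j : Fin S) × {t : ℝ // t ∈ samp j})))
       (Xaux : Finset (Fin nd × ((j : Fin S) × {t : ℝ // t ∈ samp j}))),
      (∀ e ∈ Xorig, e.1.2.1 + τ e.1.1 ≤ e.2.2.1) ∧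
      (∀ c : Fin S,
        (Xorig.filter (fun e => e.2.1 = c)).card +
        (Xaux.filter (fun e => e.2.1 = c)).card = 1) ∧
      (∀ v : (j : Fin S) × {t : ℝ // t ∈ samp j},
        (Xorig.filter (fun e => e.1 = v)).card ≤
        (Xorig.filter (fun e => e.2 = v)).card +
        (Xaux.filter (fun e => e.2 = v)).card) ∧
      (∀ i : Fin nd, (Xaux.filter (fun e => e.1 = i)).card ≤ 1)) := by
  classical
  set vert : Fin S → ((j : Fin S) × {t : ℝ // t ∈ samp j}) := fun j => ⟨j, σ j⟩ with hvert
  set below : Fin S → Finset (Fin S) :=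
    fun k => Finset.univ.filter (fun j => g j = g k ∧ (σ j).1 < (σ k).1) with hbelow
  have hmb : ∀ j k, j ∈ below k ↔ (g j = g k ∧ (σ j).1 < (σ k).1) := by
    intro j k; simp [hbelow]
  have hpex : ∀ k, ∃ p : Fin S, (below k).Nonempty →
      (p ∈ below k ∧ ∀ q ∈ below k, (σ q).1 ≤ (σ p).1) := by
    intro k
    by_cases h : (below k).Nonempty
    · obtain ⟨p, hp1, hp2⟩ := Finset.exists_max_image (below k) (fun j => (σ j).1) h
      exact ⟨p, fun _ => ⟨hp1, hp2⟩⟩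
    · exact ⟨k, fun h' => absurd h' h⟩
  choose p hp using hpex
  refine ⟨(Finset.univ.filter (fun k => (below k).Nonempty)).image
      (fun k => (vert (p k), vert k)),
    (Finset.univ.filter (fun k => ¬ (below k).Nonempty)).image
      (fun k => (g k, vert k)), ?_, ?_, ?_, ?_⟩
  · -- temporal order
    intro e he
    rw [Finset.mem_image] at he
    obtain ⟨k, hk, rfl⟩ := he
    rw [Finset.mem_filter] at hk
    have hpk := hp k hk.2
    rw [hmb] at hpk
    obtain ⟨⟨hg, hlt⟩, _⟩ := hpk
    have hne : p k ≠ k := fun h => by rw [h] at hlt; exact lt_irrefl _ hlt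
    show (σ (p k)).1 + τ (p k) ≤ (σ k).1
    rcases hchain (p k) k hg hne with h | h
    · exact h
    · have := hτ k; linarith
  · -- exactly one entering edge per class
    intro c
    by_cases hne : (below c).Nonempty
    · have hO : ((Finset.univ.filter (fun k => (below k).Nonempty)).image
          (fun k => (vert (p k), vert k))).filter (fun e => e.2.1 = c)
          = {(vert (p c), vert c)} := by
        ext e
        simp only [Finset.mem_filter, Finset.mem_image, Finset.mem_univ, true_and,
          Finset.mem_singleton]
        constructor
        · rintro ⟨⟨k, hk, rfl⟩, h2⟩
          have : k = c := h2
          subst this; rfl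
        · rintro rfl
          exact ⟨⟨c, hne, rfl⟩, rfl⟩
      have hA : ((Finset.univ.filter (fun k => ¬ (below k).Nonempty)).image
          (fun k => (g k, vert k))).filter (fun e => e.2.1 = c) = ∅ := by
        rw [Finset.eq_empty_iff_forall_notMem]
        intro e he
        rw [Finset.mem_filter, Finset.mem_image] at he
        obtain ⟨⟨k, hk, rfl⟩, h2⟩ := he
        rw [Finset.mem_filter] at hk
        have : k = c := h2
        subst this
        exact hk.2 hne
      rw [hO, hA]; simp
    · have hO : ((Finset.univ.filter (fun k => (below k).Nonempty)).image
          (fun k => (vert (p k), vert k))).filter (fun e => e.2.1 = c) = ∅ := by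
        rw [Finset.eq_empty_iff_forall_notMem]
        intro e he
        rw [Finset.mem_filter, Finset.mem_image] at he
        obtain ⟨⟨k, hk, rfl⟩, h2⟩ := he
        rw [Finset.mem_filter] at hk
        have : k = c := h2
        subst this
        exact hne hk.2
      have hA : ((Finset.univ.filter (fun k => ¬ (below k).Nonempty)).image
          (fun k => (g k, vert k))).filter (fun e => e.2.1 = c) = {(g c, vert c)} := by
        ext e
        simp only [Finset.mem_filter, Finset.mem_image, Finset.mem_univ, true_and,
          Finset.mem_singleton]
        constructor
        · rintro ⟨⟨k, hk, rfl⟩, h2⟩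
          have : k = c := h2
          subst this; rfl
        · rintro rfl
          exact ⟨⟨c, hne, rfl⟩, rfl⟩
      rw [hO, hA]; simp
  · -- flow consistency
    intro v
    by_cases hv : ∃ k, (below k).Nonempty ∧ vert (p k) = v
    · obtain ⟨k0, hk0, hvk0⟩ := hv
      have hle1 : (((Finset.univ.filter (fun k => (below k).Nonempty)).image
          (fun k => (vert (p k), vert k))).filter (fun e => e.1 = v)).card ≤ 1 := by
        rw [Finset.card_le_one]
        intro a ha b hb
        rw [Finset.mem_filter, Finset.mem_image] at ha hb
        obtain ⟨⟨ka, hka, rfl⟩, ha2⟩ := ha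
        obtain ⟨⟨kb, hkb, rfl⟩, hb2⟩ := hb
        rw [Finset.mem_filter] at hka hkb
        -- sources equal v hence p ka = p kb
        have hpp : p ka = p kb := by
          have h : vert (p ka) = vert (p kb) := ha2.trans hb2.symm
          exact congrArg Sigma.fst h
        suffices hk : ka = kb by rw [hk]
        by_contra hkne
        have hma := hp ka hka.2
        have hmb' := hp kb hkb.2
        rw [hmb] at hma hmb'
        obtain ⟨⟨hga, hlta⟩, hmaxa⟩ := hma
        obtain ⟨⟨hgb, hltb⟩, hmaxb⟩ := hmb'
        have hgab : g ka = g kb := by rw [← hga, hpp, hgb]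
        rcases hchain ka kb hgab hkne with h | h
        · have hmem : ka ∈ below kb := (hmb ka kb).mpr ⟨hgab, by have := hτ ka; linarith⟩
          have := hmaxb ka hmem
          rw [← hpp] at this
          linarith
        · have hmem : kb ∈ below ka := (hmb kb ka).mpr ⟨hgab.symm, by have := hτ kb; linarith⟩
          have := hmaxa kb hmem
          rw [hpp] at this
          linarith
      refine le_trans hle1 ?_
      -- there is an edge entering v = vert (p k0)
      by_cases hj : (below (p k0)).Nonempty
      · have hmem : (vert (p (p k0)), vert (p k0)) ∈
            ((Finset.univ.filter (fun k => (below k).Nonempty)).image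
              (fun k => (vert (p k), vert k))).filter (fun e => e.2 = v) := by
          rw [Finset.mem_filter, Finset.mem_image]
          exact ⟨⟨p k0, by simp [hj], rfl⟩, hvk0⟩
        have := Finset.card_pos.mpr ⟨_, hmem⟩
        omega
      · have hmem : (g (p k0), vert (p k0)) ∈
            ((Finset.univ.filter (fun k => ¬ (below k).Nonempty)).image
              (fun k => (g k, vert k))).filter (fun e => e.2 = v) := by
          rw [Finset.mem_filter, Finset.mem_image]
          exact ⟨⟨p k0, Finset.mem_filter.mpr ⟨Finset.mem_univ _, hj⟩, rfl⟩, hvk0⟩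
        have := Finset.card_pos.mpr ⟨_, hmem⟩
        omega
    · have hempty : ((Finset.univ.filter (fun k => (below k).Nonempty)).image
          (fun k => (vert (p k), vert k))).filter (fun e => e.1 = v) = ∅ := by
        rw [Finset.eq_empty_iff_forall_notMem]
        intro e he
        rw [Finset.mem_filter, Finset.mem_image] at he
        obtain ⟨⟨k, hk, rfl⟩, h2⟩ := he
        rw [Finset.mem_filter] at hk
        exact hv ⟨k, hk.2, h2⟩
      rw [hempty]; simp
  · -- aux out-degree
    intro i
    rw [Finset.card_le_one]
    intro a ha b hb
    rw [Finset.mem_filter, Finset.mem_image] at ha hb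
    obtain ⟨⟨ka, hka, rfl⟩, ha2⟩ := ha
    obtain ⟨⟨kb, hkb, rfl⟩, hb2⟩ := hb
    rw [Finset.mem_filter] at hka hkb
    suffices hk : ka = kb by rw [hk]
    by_contra hkne
    have hgab : g ka = g kb := by
      have h1 : g ka = i := ha2
      have h2 : g kb = i := hb2
      rw [h1, h2]
    rcases hchain ka kb hgab hkne with h | h
    · exact hkb.2 ⟨ka, (hmb ka kb).mpr ⟨hgab, by have := hτ ka; linarith⟩⟩
    · exact hka.2 ⟨kb, (hmb kb ka).mpr ⟨hgab.symm, by have := hτ kb; linarith⟩⟩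

open Classical in
/-- In the augmented graph `G′_shot` (auxiliary drone vertices connected
to all shot vertices, shot-vertex edges given by the temporal order
`t_a + τ_j ≤ t_b`), a feasible solution to the ILP (14) exists if and only if one
sampled time per shot can be chosen so that the shots partition into at most `n_d`
chains of the temporal partial order. -/
theorem ilp_feasible_iff_chain_partition
    {S nd : ℕ} (samp : Fin S → Finset ℝ) (hsamp : ∀ j, (samp j).Nonempty)
    (τ : Fin S → ℝ) (hτ : ∀ j, 0 < τ j) :
    (∃ (Xorig : Finset (((j : Fin S) × {t : ℝ // t ∈ samp j}) ×
                        ((j : Fin S) × {t : ℝ // t ∈ samp j})))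
       (Xaux : Finset (Fin nd × ((j : Fin S) × {t : ℝ // t ∈ samp j}))),
      -- selected original edges respect the temporal order of G_shot
      (∀ e ∈ Xorig, e.1.2.1 + τ e.1.1 ≤ e.2.2.1) ∧
      -- (i) exactly one selected edge enters each color (shot) class
      (∀ c : Fin S,
        (Xorig.filter (fun e => e.2.1 = c)).card +
        (Xaux.filter (fun e => e.2.1 = c)).card = 1) ∧
      -- (ii) flow consistency at each shot vertex
      (∀ v : (j : Fin S) × {t : ℝ // t ∈ samp j},
        (Xorig.filter (fun e => e.1 = v)).card ≤
        (Xorig.filter (fun e => e.2 = v)).card +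
        (Xaux.filter (fun e => e.2 = v)).card) ∧
      -- (iii) each auxiliary (drone) vertex has at most one selected outgoing edge
      (∀ i : Fin nd, (Xaux.filter (fun e => e.1 = i)).card ≤ 1)) ↔
    (∃ (σ : (j : Fin S) → {t : ℝ // t ∈ samp j}) (g : Fin S → Fin nd),
      ∀ j k : Fin S, g j = g k → j ≠ k →
        ((σ j).1 + τ j ≤ (σ k).1 ∨ (σ k).1 + τ k ≤ (σ j).1)) := by
  constructor
  · rintro ⟨Xorig, Xaux, horig, h1, h2, h3⟩
    exact fwd samp τ hτ Xorig Xaux horig h1 h2 h3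
  · rintro ⟨σ, g, hchain⟩
    exact bwd samp τ hτ σ g hchain
end
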